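/- Let W = HHT (or equivalently W = HTT). Then for all n ≥ 1, a_W(n) = Round[(1/√5)·φ^{n}] − 1 where φ = (1+√5)/2 (equivalently, a_W(n) = Fib(n) − 1 where Fib is the Fibonacci sequence with Fib(1) = Fib(2) = 1). Moreover, the expected number of flips of a fair coin until W first appears is 8 with variance 24: ∑_{n=1}^∞ n · a_W(n) · (1/2)^n = 8 and ∑_{n=1}^∞ n² · a_W(n) · (1/2)^n − 8² = 24. -/

import Mathlib

/-!
Neither HHT nor HTT has a proper nonempty prefix that is also a suffix, so an occurrence of `W`
ending inside `t ++ W.dropLast` already lies inside `t`. Hence the sequences of length `m + 3`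
in which `W` first appears at the end are exactly `t ++ W` with `t` of length `m` avoiding `W`.
A sequence avoiding HHT starts with T, with HT, or is a run of H's, so the numbers `b m` of
avoiders satisfy `b (m + 2) = b (m + 1) + b m + 1`, i.e. `b m + 1 = F (m + 3)`; reversing and
complementing turns HTT-avoiders into HHT-avoiders.

For the moments, Binet's formula reduces `∑ n ^ k F n / 2 ^ n` to `∑ n ^ k (a / 2) ^ n` for the
roots `a` of `X ^ 2 = X + 1`, where `1 - a / 2 = (2 a ^ 2)⁻¹`. This gives `∑ n F n / 2 ^ n = 2 F 5`
and `∑ n ^ 2 F n / 2 ^ n = 4 F 7 + 2 F 8`.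
-/

/-- The number of binary sequences (lists of Booleans, `true` = H, `false` = T) of
length `n` in which the word `W` appears for the first time exactly at the end:
`W` is a suffix of `l` and `W` does not occur as a contiguous sublist of `l` with
its last entry removed. -/
noncomputable def firstCount (W : List Bool) (n : ℕ) : ℕ :=
  Nat.card {l : List Bool // l.length = n ∧ W <:+ l ∧ ¬ (W <:+: l.dropLast)}

open List

section Words

variable {α : Type*}

def IsUnbordered (W : List α) : Prop := ∀ p, p <+: W → p <:+ W → p = [] ∨ p = W

def avoiding (W : List α) (m : ℕ) : Set (List α) := {l | l.length = m ∧ ¬ W <:+: l}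

lemma isUnbordered_iff_inits (W : List α) :
    IsUnbordered W ↔ ∀ p ∈ W.inits, p <:+ W → p = [] ∨ p = W := by
  simp only [mem_inits, IsUnbordered]

lemma IsUnbordered.infix_append_iff {W t p : List α} (hW : IsUnbordered W) (hp : p <+: W)
    (hpW : p.length < W.length) : W <:+: t ++ p ↔ W <:+: t := by
  refine ⟨fun h => ?_, fun h => h.trans (prefix_append t p).isInfix⟩
  rcases List.infix_append_iff.1 h with h | h | ⟨l₁, l₂, rfl, h₁, h₂⟩
  · exact h
  · exact absurd h.length_le (by omega)
  · rcases hW l₂ (h₂.trans hp) (suffix_append l₁ l₂) with rfl | h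
    · simpa using h₁.isInfix
    · have hlen := congrArg length h
      have hle := h₂.length_le
      simp only [length_append] at hlen hpW
      omega

lemma avoiding_finite [Finite α] (W : List α) (m : ℕ) : (avoiding W m).Finite :=
  (List.finite_length_eq α m).subset fun _ hl => hl.1

lemma IsUnbordered.firstOccurrence_eq_image {W : List α} (hW : IsUnbordered W) (hne : W ≠ [])
    (m : ℕ) : {l | l.length = m + W.length ∧ W <:+ l ∧ ¬ W <:+: l.dropLast} =
      (· ++ W) '' avoiding W m := by
  have hdrop : ∀ t : List α, W <:+: (t ++ W).dropLast ↔ W <:+: t := fun t => by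
    rw [dropLast_append_of_ne_nil hne]
    exact hW.infix_append_iff (dropLast_prefix W) (by simp [length_pos_iff.2 hne])
  ext l
  constructor
  · rintro ⟨hlen, ⟨t, rfl⟩, hocc⟩
    exact ⟨t, ⟨by simpa using hlen, (hdrop t).not.1 hocc⟩, rfl⟩
  · rintro ⟨t, ⟨rfl, hav⟩, rfl⟩
    exact ⟨length_append, suffix_append t W, (hdrop t).not.2 hav⟩

lemma ncard_avoiding_reverse_map {f : α → α} (hf : Function.Involutive f) (W : List α) (m : ℕ) :
    (avoiding (W.map f).reverse m).ncard = (avoiding W m).ncard := by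
  set σ : List α → List α := fun l => (l.map f).reverse
  have hσ : Function.Involutive σ := fun l => by
    simp [σ, ← map_reverse, map_map, hf.comp_self]
  have hinfix : ∀ {u v}, u <:+: v → σ u <:+: σ v := fun h => reverse_infix.2 (h.map f)
  have : avoiding (σ W) m = σ ⁻¹' avoiding W m := by
    ext l
    refine and_congr (by simp [σ]) (not_congr ⟨fun h => ?_, fun h => ?_⟩)
    · simpa [hσ W] using hinfix h
    · simpa [hσ l] using hinfix h
  rw [this, Set.ncard_preimage_of_injective_subset_range hσ.injective
    (by simp [hσ.surjective.range_eq])]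

end Words

lemma firstCount_eq_ncard (W : List Bool) (n : ℕ) :
    firstCount W n = {l : List Bool | l.length = n ∧ W <:+ l ∧ ¬ W <:+: l.dropLast}.ncard :=
  (Nat.card_coe_set_eq _).symm

lemma firstCount_of_lt_length {W : List Bool} {n : ℕ} (hn : n < W.length) :
    firstCount W n = 0 := by
  rw [firstCount, Nat.card_eq_zero]
  exact Or.inl ⟨fun ⟨l, hl, hsuf, _⟩ => by
    have := hsuf.length_le
    omega⟩

lemma IsUnbordered.firstCount_add_length {W : List Bool} (hW : IsUnbordered W) (hne : W ≠ [])
    (m : ℕ) : firstCount W (m + W.length) = (avoiding W m).ncard := by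
  rw [firstCount_eq_ncard, hW.firstOccurrence_eq_image hne,
    Set.ncard_image_of_injective _ (append_left_injective W)]

notation "HHT" => ([true, true, false] : List Bool)
notation "HTT" => ([true, false, false] : List Bool)

section AvoidingHHT

lemma hht_infix_true_true_cons {t : List Bool} :
    HHT <:+: true :: true :: t ↔ t ≠ replicate t.length true := by
  induction t with
  | nil => decide
  | cons a t ih =>
    cases a
    · simpa [replicate_succ] using (show HHT <:+: true :: true :: false :: t from ⟨[], t, rfl⟩)
    · rw [infix_cons_iff, ih]
      simp [replicate_succ]

lemma avoiding_hht_add_two (m : ℕ) :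
    avoiding HHT (m + 2) = cons false '' avoiding HHT (m + 1) ∪
      (cons true ∘ cons false) '' avoiding HHT m ∪ {replicate (m + 2) true} := by
  ext l
  match l with
  | [] => simp [avoiding]
  | [a] => simp [avoiding, replicate_succ]
  | false :: b :: t => simp [avoiding, infix_cons_iff, replicate_succ]
  | true :: false :: t => simp [avoiding, infix_cons_iff, replicate_succ]
  | true :: true :: t =>
    simp [avoiding, hht_infix_true_true_cons, replicate_succ, eq_replicate_iff]

lemma ncard_avoiding_hht_add_two (m : ℕ) :
    (avoiding HHT (m + 2)).ncard = (avoiding HHT (m + 1)).ncard + (avoiding HHT m).ncard + 1 := by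
  have hfin₁ := (avoiding_finite HHT (m + 1)).image (cons false)
  have hfin₂ := (avoiding_finite HHT m).image (cons true ∘ cons false)
  have hdisj₁ : Disjoint (cons false '' avoiding HHT (m + 1))
      ((cons true ∘ cons false) '' avoiding HHT m) := by
    simp [Set.disjoint_left]
  have hdisj₂ : Disjoint (cons false '' avoiding HHT (m + 1) ∪
      (cons true ∘ cons false) '' avoiding HHT m) {replicate (m + 2) true} := by
    rw [Set.disjoint_singleton_right]
    rintro (⟨x, -, hx⟩ | ⟨x, -, hx⟩) <;> simp [replicate_succ] at hx
  have hinj : Function.Injective (cons true ∘ cons false) := by simp [Function.Injective]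
  rw [avoiding_hht_add_two, Set.ncard_union_eq hdisj₂ (hfin₁.union hfin₂),
    Set.ncard_union_eq hdisj₁ hfin₁ hfin₂, Set.ncard_image_of_injective _ cons_injective,
    Set.ncard_image_of_injective _ hinj, Set.ncard_singleton]

lemma ncard_avoiding_hht_add_one (m : ℕ) : (avoiding HHT m).ncard + 1 = Nat.fib (m + 3) := by
  induction m using Nat.twoStepInduction with
  | zero =>
    rw [show avoiding HHT 0 = {[]} by ext l; cases l <;> simp [avoiding], Set.ncard_singleton]
    rfl
  | one =>
    have : avoiding HHT 1 = {[true], [false]} := by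
      ext l
      rcases l with _ | ⟨a, _ | ⟨b, t⟩⟩
      · simp [avoiding]
      · cases a <;> simp [avoiding] <;> decide
      · simp [avoiding]
    rw [this, Set.ncard_pair (by simp)]
    rfl
  | more m ih₁ ih₂ =>
    rw [ncard_avoiding_hht_add_two, show m + 2 + 3 = m + 3 + 2 from rfl, Nat.fib_add_two]
    rw [show m + 1 + 3 = m + 3 + 1 from rfl] at ih₂
    omega

end AvoidingHHT

lemma firstCount_eq_fib_sub_one {W : List Bool} (hW : W = HHT ∨ W = HTT) (n : ℕ) :
    firstCount W n = Nat.fib n - 1 := by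
  have hU : IsUnbordered W := by
    rw [isUnbordered_iff_inits]
    rcases hW with rfl | rfl <;> decide
  have hlen : W.length = 3 := by rcases hW with rfl | rfl <;> rfl
  have hcount (m : ℕ) : (avoiding W m).ncard = (avoiding HHT m).ncard := by
    rcases hW with rfl | rfl
    · rfl
    · exact ncard_avoiding_reverse_map Bool.involutive_not HHT m
  rcases lt_or_ge n 3 with hn | hn
  · rw [firstCount_of_lt_length (hlen ▸ hn)]
    interval_cases n <;> rfl
  · obtain ⟨m, rfl⟩ := Nat.exists_eq_add_of_le' hn
    have hb := ncard_avoiding_hht_add_one m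
    rw [← hlen, hU.firstCount_add_length (ne_nil_of_length_pos (by omega)), hcount, hlen]
    omega

section FibonacciSeries

open Real goldenRatio

lemma round_goldenRatio_pow_div_sqrt_five (n : ℕ) : round (1 / √5 * φ ^ n) = Nat.fib n := by
  have hsqrt : 2 < √5 := by
    rw [show (2 : ℝ) = √(2 ^ 2) by simp]
    exact Real.sqrt_lt_sqrt (by norm_num) (by norm_num)
  have hψ : |ψ ^ n| ≤ 1 := by
    rw [abs_pow]
    exact pow_le_one₀ (abs_nonneg ψ)
      (abs_le.2 ⟨neg_one_lt_goldenConj.le, goldenConj_neg.le.trans zero_le_one⟩)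
  have hsmall : |ψ ^ n / √5| < 1 / 2 := by
    rw [abs_div, abs_of_pos (by positivity : (0 : ℝ) < √5), div_lt_iff₀ (by positivity)]
    linarith
  obtain ⟨hlow, hhigh⟩ := abs_lt.1 hsmall
  rw [show 1 / √5 * φ ^ n = Nat.fib n + ψ ^ n / √5 by rw [coe_fib_eq]; ring,
    round_natCast_add, round_eq_zero_iff.2 ⟨by linarith, hhigh⟩, add_zero]

lemma hasSum_sq_mul_geometric_of_norm_lt_one {𝕜 : Type*} [NormedField 𝕜]
    [HasSummableGeomSeries 𝕜] {r : 𝕜} (hr : ‖r‖ < 1) :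
    HasSum (fun n : ℕ => (n : 𝕜) ^ 2 * r ^ n) (r * (1 + r) / (1 - r) ^ 3) := by
  have hr₁ : 1 - r ≠ 0 := sub_ne_zero.2 (fun h => by simp [← h] at hr)
  have h := (((hasSum_choose_mul_geometric_of_norm_lt_one 2 hr).mul_left 2).sub
    ((hasSum_coe_mul_geometric_of_norm_lt_one hr).mul_left 3)).sub
    ((hasSum_geometric_of_norm_lt_one hr).mul_left 2)
  rw [show 2 * (1 / (1 - r) ^ (2 + 1)) - 3 * (r / (1 - r) ^ 2) - 2 * (1 - r)⁻¹ =
    r * (1 + r) / (1 - r) ^ 3 by field_simp; ring] at h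
  -- termwise, `n ^ 2 = 2 * (n + 2).choose 2 - 3 * n - 2`
  refine h.congr_fun fun n => ?_
  have hchoose : (n + 2) * (n + 1) = (n + 2).choose 2 * 2 := by
    simpa using Nat.add_one_mul_choose_eq (n + 1) 1
  have hcast : ((n : 𝕜) + 2) * (n + 1) = ((n + 2).choose 2 : ℕ) * 2 := by
    simpa using congrArg (Nat.cast : ℕ → 𝕜) hchoose
  linear_combination (r ^ n) * hcast

lemma hasSum_moments_of_sq_eq_add_one {a : ℝ} (ha : a ^ 2 = a + 1) (ha₂ : |a| < 2) :
    HasSum (fun n : ℕ => (n : ℝ) * (a / 2) ^ n) (2 * a ^ 5) ∧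
      HasSum (fun n : ℕ => (n : ℝ) ^ 2 * (a / 2) ^ n) (4 * a ^ 7 + 2 * a ^ 8) := by
  have hr : ‖a / 2‖ < 1 := by
    rw [Real.norm_eq_abs, abs_div, abs_two]
    linarith
  have hkey : 1 - a / 2 = (2 * a ^ 2)⁻¹ :=
    eq_inv_of_mul_eq_one_left (by linear_combination (1 - a) * ha)
  have h₁ := hasSum_coe_mul_geometric_of_norm_lt_one hr
  have h₂ := hasSum_sq_mul_geometric_of_norm_lt_one hr
  rw [hkey, inv_pow, div_inv_eq_mul] at h₁ h₂
  rw [show a / 2 * (2 * a ^ 2) ^ 2 = 2 * a ^ 5 by ring] at h₁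
  rw [show a / 2 * (1 + a / 2) * (2 * a ^ 2) ^ 3 = 4 * a ^ 7 + 2 * a ^ 8 by ring] at h₂
  exact ⟨h₁, h₂⟩

lemma hasSum_mul_fib_mul_pow {g : ℕ → ℝ} {c A B : ℝ}
    (hφ : HasSum (fun n => g n * (φ / c) ^ n) A) (hψ : HasSum (fun n => g n * (ψ / c) ^ n) B) :
    HasSum (fun n => g n * Nat.fib n * (1 / c) ^ n) ((A - B) / √5) :=
  ((hφ.sub hψ).div_const √5).congr_fun fun n => by
    simp only [coe_fib_eq, div_eq_mul_inv, mul_pow]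
    ring

lemma hasSum_mul_fib_mul_half :
    HasSum (fun n : ℕ => (n : ℝ) * Nat.fib n * (1 / 2) ^ n) 10 ∧
      HasSum (fun n : ℕ => (n : ℝ) ^ 2 * Nat.fib n * (1 / 2) ^ n) 94 := by
  obtain ⟨hφ₁, hφ₂⟩ := hasSum_moments_of_sq_eq_add_one goldenRatio_sq
    (by rw [abs_of_pos goldenRatio_pos]; exact goldenRatio_lt_two)
  obtain ⟨hψ₁, hψ₂⟩ := hasSum_moments_of_sq_eq_add_one goldenConj_sq
    (abs_lt.2 ⟨by linarith [neg_one_lt_goldenConj], by linarith [goldenConj_neg]⟩)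
  have hfib (k : ℕ) : (φ ^ k - ψ ^ k) / √5 = Nat.fib k := (coe_fib_eq k).symm
  constructor
  · convert hasSum_mul_fib_mul_pow hφ₁ hψ₁ using 1
    rw [show 2 * φ ^ 5 - 2 * ψ ^ 5 = 2 * (φ ^ 5 - ψ ^ 5) by ring, mul_div_assoc, hfib]
    norm_num [Nat.fib_add_two]
  · convert hasSum_mul_fib_mul_pow hφ₂ hψ₂ using 1
    rw [show 4 * φ ^ 7 + 2 * φ ^ 8 - (4 * ψ ^ 7 + 2 * ψ ^ 8) =
      4 * (φ ^ 7 - ψ ^ 7) + 2 * (φ ^ 8 - ψ ^ 8) by ring, add_div, mul_div_assoc, mul_div_assoc,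
      hfib, hfib]
    norm_num [Nat.fib_add_two]

end FibonacciSeries

lemma hasSum_mul_fib_sub_one_mul_half :
    HasSum (fun n : ℕ => (n : ℝ) * ((Nat.fib n - 1 : ℕ) : ℝ) * (1 / 2) ^ n) 8 ∧
      HasSum (fun n : ℕ => (n : ℝ) ^ 2 * ((Nat.fib n - 1 : ℕ) : ℝ) * (1 / 2) ^ n) 88 := by
  have hsub {f : ℕ → ℝ} (hf : f 0 = 0) (n : ℕ) :
      f n * ((Nat.fib n - 1 : ℕ) : ℝ) = f n * Nat.fib n - f n := by
    rcases n with _ | n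
    · simp [hf]
    · rw [Nat.cast_sub (Nat.fib_pos.2 n.succ_pos), Nat.cast_one]
      ring
  have hhalf : ‖(1 / 2 : ℝ)‖ < 1 := by norm_num
  obtain ⟨hfib₁, hfib₂⟩ := hasSum_mul_fib_mul_half
  have h₁ := hfib₁.sub (hasSum_coe_mul_geometric_of_norm_lt_one hhalf)
  have h₂ := hfib₂.sub (hasSum_sq_mul_geometric_of_norm_lt_one hhalf)
  rw [show (10 : ℝ) - 1 / 2 / (1 - 1 / 2) ^ 2 = 8 by norm_num] at h₁
  rw [show (94 : ℝ) - 1 / 2 * (1 + 1 / 2) / (1 - 1 / 2) ^ 3 = 88 by norm_num] at h₂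
  refine ⟨h₁.congr_fun fun n => ?_, h₂.congr_fun fun n => ?_⟩
  · rw [hsub (f := fun n : ℕ => (n : ℝ)) Nat.cast_zero]
    ring
  · rw [hsub (f := fun n : ℕ => (n : ℝ) ^ 2) (by simp)]
    ring

theorem stmt_17 :
    ∀ W : List Bool, W = [true, true, false] ∨ W = [true, false, false] →
      (∀ n : ℕ, 1 ≤ n →
        (firstCount W n : ℤ)
          = round ((1 / Real.sqrt 5) * ((1 + Real.sqrt 5) / 2) ^ n) - 1 ∧
        firstCount W n = Nat.fib n - 1) ∧
      Summable (fun n : ℕ => (n : ℝ) * (firstCount W n : ℝ) * (1 / 2) ^ n) ∧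
      (∑' n : ℕ, (n : ℝ) * (firstCount W n : ℝ) * (1 / 2) ^ n) = 8 ∧
      Summable (fun n : ℕ => (n : ℝ) ^ 2 * (firstCount W n : ℝ) * (1 / 2) ^ n) ∧
      (∑' n : ℕ, (n : ℝ) ^ 2 * (firstCount W n : ℝ) * (1 / 2) ^ n) - 8 ^ 2 = 24 := by
  intro W hW
  have hcount := firstCount_eq_fib_sub_one hW
  refine ⟨fun n hn => ⟨?_, hcount n⟩, ?_⟩
  · rw [hcount, round_goldenRatio_pow_div_sqrt_five, Nat.cast_sub (Nat.fib_pos.2 hn),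
      Nat.cast_one]
  obtain ⟨h₁, h₂⟩ := hasSum_mul_fib_sub_one_mul_half
  simp only [hcount]
  refine ⟨h₁.summable, h₁.tsum_eq, h₂.summable, ?_⟩
  rw [h₂.tsum_eq]
  norm_num
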